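/- arXiv:2504.14424 — 3 statements merged into one kernel-verified Lean document; each statement's English description precedes it below -/
import Mathlib

section
/- Let d ≥ 1 be an integer, let ε ≥ 0 be real, and let C₁,…,C_d and α₁,…,α_d be real numbers with C_i ≥ 1 + ε and α_i ≥ 0 for every 1 ≤ i ≤ d. Then ∏_{i=1}^d (1 + ε + C_i·Exp(α_i)) ≤ (1+ε)^d + (∏_{i=1}^d C_i)·Exp(α₁ + ⋯ + α_d). -/
/-- `Exp x = e^x − 1`. -/
noncomputable def Expm (x : ℝ) : ℝ := Real.exp x - 1

/-!
With `u i = Exp (α i)` one has `Exp (∑ α) = ∏ (1 + u i) - 1`, so the claim is the inequality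
`∏ (a + C i u i) ≤ aᵈ + (∏ C i) (∏ (1 + u i) - 1)` for `0 ≤ a ≤ C i` and `0 ≤ u i`. This follows by
induction on the number of factors, the step using only `aⁿ ≤ ∏ C i` and `∏ (1 + u i) ≥ 1`.
-/

open Finset

section OrderedRing

variable {R : Type*} [CommRing R] [LinearOrder R] [IsStrictOrderedRing R]

theorem add_mul_mul_add_mul_le {a c u v p q : R} (ha : 0 ≤ a) (hac : a ≤ c) (hu : 0 ≤ u)
    (hv : 0 ≤ v) (hqp : q ≤ p) (hp : 0 ≤ p) :
    (a + c * u) * (q + p * v) ≤ a * q + c * p * (u + v + u * v) := by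
  have hcpv : 0 ≤ (c - a) * p * v := mul_nonneg (mul_nonneg (sub_nonneg.2 hac) hp) hv
  have hcup : 0 ≤ c * u * (p - q) :=
    mul_nonneg (mul_nonneg (ha.trans hac) hu) (sub_nonneg.2 hqp)
  linear_combination hcpv + hcup

theorem prod_add_mul_le_pow_add_prod_mul {ι : Type*} (s : Finset ι) {a : R} (ha : 0 ≤ a)
    {C u : ι → R} (hC : ∀ i ∈ s, a ≤ C i) (hu : ∀ i ∈ s, 0 ≤ u i) :
    ∏ i ∈ s, (a + C i * u i) ≤ a ^ #s + (∏ i ∈ s, C i) * (∏ i ∈ s, (1 + u i) - 1) := by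
  classical
  induction s using Finset.induction_on with
  | empty => simp
  | insert j s hj ih =>
    simp only [forall_mem_insert] at hC hu
    have hpow : a ^ #s ≤ ∏ i ∈ s, C i :=
      (prod_const a).symm.trans_le (prod_le_prod (fun _ _ => ha) hC.2)
    have hprod : 0 ≤ ∏ i ∈ s, (1 + u i) - 1 :=
      sub_nonneg.2 (Finset.one_le_prod fun i hi => le_add_of_nonneg_right (hu.2 i hi))
    have hfac : 0 ≤ a + C j * u j := add_nonneg ha (mul_nonneg (ha.trans hC.1) hu.1)
    rw [prod_insert hj, prod_insert hj, prod_insert hj, card_insert_of_notMem hj, pow_succ']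
    calc (a + C j * u j) * ∏ i ∈ s, (a + C i * u i)
        ≤ (a + C j * u j) * (a ^ #s + (∏ i ∈ s, C i) * (∏ i ∈ s, (1 + u i) - 1)) :=
          mul_le_mul_of_nonneg_left (ih hC.2 hu.2) hfac
      _ ≤ a * a ^ #s + C j * (∏ i ∈ s, C i) *
            (u j + (∏ i ∈ s, (1 + u i) - 1) + u j * (∏ i ∈ s, (1 + u i) - 1)) :=
          add_mul_mul_add_mul_le ha hC.1 hu.1 hprod hpow ((pow_nonneg ha _).trans hpow)
      _ = _ := by ring

end OrderedRing

theorem prod_one_add_expm_eq_expm_sum {ι : Type*} (s : Finset ι) (α : ι → ℝ) :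
    ∏ i ∈ s, (1 + Expm (α i)) - 1 = Expm (∑ i ∈ s, α i) := by
  simp [Expm, Real.exp_sum]

theorem prod_one_add_eps_add_Exp_le_general
    (d : ℕ) (ε : ℝ) (hε : 0 ≤ ε)
    (C α : Fin d → ℝ) (hC : ∀ i, 1 + ε ≤ C i) (hα : ∀ i, 0 ≤ α i) :
    ∏ i : Fin d, (1 + ε + C i * Expm (α i)) ≤
      (1 + ε) ^ d + (∏ i : Fin d, C i) * Expm (∑ i : Fin d, α i) := by
  have h := prod_add_mul_le_pow_add_prod_mul univ (by linarith : (0 : ℝ) ≤ 1 + ε)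
    (fun i _ => hC i) (u := fun i => Expm (α i))
    (fun i _ => sub_nonneg.2 (Real.one_le_exp (hα i)))
  rwa [prod_one_add_expm_eq_expm_sum, card_univ, Fintype.card_fin] at h

theorem prod_one_add_eps_add_Exp_le
    (d : ℕ) (hd : 1 ≤ d) (ε : ℝ) (hε : 0 ≤ ε)
    (C α : Fin d → ℝ) (hC : ∀ i, 1 + ε ≤ C i) (hα : ∀ i, 0 ≤ α i) :
    ∏ i : Fin d, (1 + ε + C i * Expm (α i)) ≤
      (1 + ε) ^ d + (∏ i : Fin d, C i) * Expm (∑ i : Fin d, α i) :=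
  prod_one_add_eps_add_Exp_le_general d ε hε C α hC hα
end

section
/- Let d ≥ 1 be an integer, let ε ≥ 0 and C ≥ 1 + ε be real numbers, and let α₁,…,α_d be nonnegative reals. Then ∏_{i=1}^d (1 + ε + C·Exp(α_i)) ≤ (1+ε)^d + C^d·∑_{i=1}^d Exp(2^d·α_i). -/
/-!
Expanding `∏ (1 + ε + C Exp αᵢ)`, every monomial other than `(1 + ε) ^ d` has a coefficient
bounded by `C ^ d`, so the product is at most `(1 + ε) ^ d + C ^ d (∏ (1 + Exp αᵢ) - 1)`, and the
last product is `exp (∑ αᵢ)`. Finally `∑ αᵢ ≤ d · max αᵢ ≤ 2 ^ d · max αᵢ`, and `Exp` of the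
maximal term is bounded by the whole sum.
-/

open Finset

lemma one_add_Expm (x : ℝ) : 1 + Expm x = Real.exp x := by
  rw [Expm, add_sub_cancel]

lemma Expm_nonneg {x : ℝ} (hx : 0 ≤ x) : 0 ≤ Expm x :=
  sub_nonneg.2 (Real.one_le_exp hx)

lemma Expm_monotone : Monotone Expm :=
  fun _ _ h ↦ sub_le_sub_right (Real.exp_le_exp.2 h) 1

lemma Expm_sum_eq_prod {ι : Type*} (s : Finset ι) (x : ι → ℝ) :
    Expm (∑ i ∈ s, x i) = ∏ i ∈ s, (1 + Expm (x i)) - 1 := by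
  simp_rw [one_add_Expm]
  rw [Expm, Real.exp_sum]

lemma prod_add_mul_le_pow_add_pow_mul {ι : Type*} (s : Finset ι) {a C : ℝ} (ha : 0 ≤ a)
    (haC : a ≤ C) {f : ι → ℝ} (hf : ∀ i ∈ s, 0 ≤ f i) :
    ∏ i ∈ s, (a + C * f i) ≤ a ^ #s + C ^ #s * (∏ i ∈ s, (1 + f i) - 1) := by
  induction s using Finset.cons_induction with
  | empty => simp
  | cons j s hj ih =>
    have hfj : 0 ≤ f j := hf j (mem_cons_self j s)
    have hfs : ∀ i ∈ s, 0 ≤ f i := fun i hi ↦ hf i (mem_cons_of_mem hi)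
    set P := ∏ i ∈ s, (a + C * f i)
    set Q := ∏ i ∈ s, (1 + f i)
    have hQ : 1 ≤ Q := one_le_prod fun i hi ↦ le_add_of_nonneg_right (hfs i hi)
    have hC0 : 0 ≤ C := ha.trans haC
    have hPQ : P ≤ C ^ #s * Q := by
      rw [← prod_const, ← prod_mul_distrib]
      refine prod_le_prod (fun i hi ↦ add_nonneg ha (mul_nonneg hC0 (hfs i hi))) fun i hi ↦ ?_
      nlinarith [hfs i hi]
    have hgap : a * (P - a ^ #s) ≤ C * (C ^ #s * (Q - 1)) := by
      calc a * (P - a ^ #s) ≤ a * (C ^ #s * (Q - 1)) :=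
            mul_le_mul_of_nonneg_left (by linarith [ih hfs]) ha
        _ ≤ C * (C ^ #s * (Q - 1)) :=
            mul_le_mul_of_nonneg_right haC (mul_nonneg (pow_nonneg hC0 _) (by linarith))
    have hmul : C * f j * P ≤ C * f j * (C ^ #s * Q) :=
      mul_le_mul_of_nonneg_left hPQ (mul_nonneg hC0 hfj)
    rw [prod_cons, prod_cons, card_cons, pow_succ, pow_succ]
    linarith

lemma Expm_sum_le_sum_Expm_card_mul {ι : Type*} (s : Finset ι) {x : ι → ℝ}
    (hx : ∀ i ∈ s, 0 ≤ x i) : Expm (∑ i ∈ s, x i) ≤ ∑ i ∈ s, Expm (#s * x i) := by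
  obtain rfl | hs := s.eq_empty_or_nonempty
  · simp [Expm]
  obtain ⟨m, hm, hmax⟩ := exists_max_image s x hs
  calc Expm (∑ i ∈ s, x i) ≤ Expm (#s * x m) :=
        Expm_monotone (by simpa using sum_le_card_nsmul s x (x m) hmax)
    _ ≤ ∑ i ∈ s, Expm (#s * x i) :=
        single_le_sum (fun i hi ↦ Expm_nonneg (mul_nonneg (Nat.cast_nonneg _) (hx i hi))) hm

theorem prod_one_add_eps_add_CExp_le_general
    (d : ℕ) (ε C : ℝ) (hε : 0 ≤ ε) (hC : 1 + ε ≤ C)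
    (α : Fin d → ℝ) (hα : ∀ i, 0 ≤ α i) :
    ∏ i : Fin d, (1 + ε + C * Expm (α i)) ≤
      (1 + ε) ^ d + C ^ d * ∑ i : Fin d, Expm (2 ^ d * α i) := by
  have hCd : 0 ≤ C ^ d := pow_nonneg (by linarith) d
  have hd : (d : ℝ) ≤ 2 ^ d := by exact_mod_cast Nat.lt_two_pow_self.le
  calc ∏ i : Fin d, (1 + ε + C * Expm (α i))
      ≤ (1 + ε) ^ d + C ^ d * (∏ i : Fin d, (1 + Expm (α i)) - 1) := by
        simpa using prod_add_mul_le_pow_add_pow_mul univ (by linarith) hC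
          (fun i _ ↦ Expm_nonneg (hα i))
    _ = (1 + ε) ^ d + C ^ d * Expm (∑ i, α i) := by rw [Expm_sum_eq_prod]
    _ ≤ (1 + ε) ^ d + C ^ d * ∑ i : Fin d, Expm (d * α i) := by
        gcongr
        simpa using Expm_sum_le_sum_Expm_card_mul univ fun i _ ↦ hα i
    _ ≤ (1 + ε) ^ d + C ^ d * ∑ i : Fin d, Expm (2 ^ d * α i) := by
        gcongr with i
        exact Expm_monotone (mul_le_mul_of_nonneg_right hd (hα i))

theorem prod_one_add_eps_add_CExp_le
    (d : ℕ) (hd : 1 ≤ d) (ε C : ℝ) (hε : 0 ≤ ε) (hC : 1 + ε ≤ C)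
    (α : Fin d → ℝ) (hα : ∀ i, 0 ≤ α i) :
    ∏ i : Fin d, (1 + ε + C * Expm (α i)) ≤
      (1 + ε) ^ d + C ^ d * ∑ i : Fin d, Expm (2 ^ d * α i) :=
  prod_one_add_eps_add_CExp_le_general d ε C hε hC α hα
end

section
/- Let N, M, H, d, s, t ≥ 1 be integers, X = (ℤ/Nℤ)^d, and let Q₁,…,Q_s : ℤ^t → ℤ^d be maps. Then for all f, g : X → ℝ the triangle inequality ‖f+g‖_{□_{H,M}(Q₁,…,Q_s)} ≤ ‖f‖_{□_{H,M}(Q₁,…,Q_s)} + ‖g‖_{□_{H,M}(Q₁,…,Q_s)} holds; in particular ‖·‖_{□_{H,M}(Q₁,…,Q_s)} is a seminorm. -/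
open Finset

/-- The Gowers-type local box inner product at scale `M` of a family of functions
`f_ω : (ℤ/Nℤ)^d → ℝ`, `ω ∈ {0,1}^s`, with directions `u₁,…,u_s ∈ ℤ^d`. -/
noncomputable def boxInner (N d s M : ℕ) [NeZero N] (u : Fin s → Fin d → ℤ)
    (f : (Fin s → Bool) → (Fin d → ZMod N) → ℝ) : ℝ :=
  (∑ x : Fin d → ZMod N,
    ∑ y0 ∈ Fintype.piFinset (fun _ : Fin s => Finset.Icc 1 M),
      ∑ y1 ∈ Fintype.piFinset (fun _ : Fin s => Finset.Icc 1 M),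
        ∏ ω : Fin s → Bool,
          f ω fun i => x i + ∑ j : Fin s,
            (((if ω j then y1 j else y0 j : ℕ) : ZMod N) * ((u j i : ℤ) : ZMod N))) /
    ((N : ℝ) ^ d * (M : ℝ) ^ (2 * s))

/-- The local box norm `‖f‖_{□_M(u₁,…,u_s)}`. -/
noncomputable def boxNorm (N d s M : ℕ) [NeZero N] (u : Fin s → Fin d → ℤ)
    (f : (Fin d → ZMod N) → ℝ) : ℝ :=
  boxInner N d s M u (fun _ => f) ^ ((1 : ℝ) / 2 ^ s)

/-- The averaged local box norm `‖f‖_{□_{H,M}(Q₁,…,Q_s)}`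
`= (E_{h∈[H]^t} ‖f‖_{□_M(Q₁(h),…,Q_s(h))}^{2^s})^{1/2^s}`. -/
noncomputable def avgBoxNorm (N d s t M H : ℕ) [NeZero N]
    (Q : Fin s → (Fin t → ℤ) → Fin d → ℤ) (f : (Fin d → ZMod N) → ℝ) : ℝ :=
  ((∑ h ∈ Fintype.piFinset (fun _ : Fin t => Finset.Icc (1 : ℤ) (H : ℤ)),
      boxNorm N d s M (fun j => Q j h) f ^ (2 ^ s : ℕ)) / (H : ℝ) ^ t) ^ ((1 : ℝ) / 2 ^ s)

/-!
For fixed `x` and `h`, the summand of the local box norm is the `s`-dimensional box norm of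
`a ↦ f (x + a₁u₁ + ⋯ + a_su_s)` on `[M]^s`. This box norm satisfies the Gowers–Cauchy–Schwarz
inequality, obtained by applying Cauchy–Schwarz in one coordinate at a time; expanding
`∏_ω (f + g)` multilinearly then gives its triangle inequality. The local box norm and its average
over `h` are `ℓ^{2^s}`-means of such seminorms, so Minkowski's inequality finishes the proof.
-/

open Function
open Fintype (piFinset)

section Cube
variable {ι : Type*} [Fintype ι] [DecidableEq ι]

lemma prod_filter_comp_update {M : Type*} [CommMonoid M] (Φ : (ι → Bool) → M) (j : ι)
    (b b' : Bool) : ∏ ω with ω j = b', Φ (update ω j b) = ∏ ω with ω j = b, Φ ω :=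
  prod_nbij' (update · j b) (update · j b') (by simp) (by simp)
    (fun ω hω => by simp_all) (fun ω hω => by simp_all) fun _ _ => rfl

lemma prod_eq_prod_filter_false_mul {M : Type*} [CommMonoid M] (Φ : (ι → Bool) → M) (j : ι) :
    ∏ ω, Φ ω = (∏ ω with ω j = false, Φ ω) * ∏ ω with ω j = true, Φ ω := by
  rw [← prod_fiberwise univ (· j) Φ, Fintype.prod_bool, mul_comm]

lemma prod_comp_update {M : Type*} [CommMonoid M] (Φ : (ι → Bool) → M) (j : ι) (b : Bool) :
    ∏ ω, Φ (update ω j b) = (∏ ω with ω j = b, Φ ω) ^ 2 := by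
  rw [prod_eq_prod_filter_false_mul _ j, prod_filter_comp_update, prod_filter_comp_update, sq]

lemma prod_comp_update_false_mul_true {M : Type*} [CommMonoid M] (Φ : (ι → Bool) → M) (j : ι) :
    ∏ ω, Φ (update ω j false) * Φ (update ω j true) = (∏ ω, Φ ω) ^ 2 := by
  rw [prod_mul_distrib, prod_comp_update, prod_comp_update, ← mul_pow,
    ← prod_eq_prod_filter_false_mul]

lemma sum_sum_prod_ite_eq_mul {R γ : Type*} [CommSemiring R] (Φ : (ι → Bool) → γ → R) (j : ι)
    (C : Finset γ) :
    ∑ c₀ ∈ C, ∑ c₁ ∈ C, ∏ ω, Φ ω (if ω j then c₁ else c₀) =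
      (∑ c ∈ C, ∏ ω with ω j = false, Φ ω c) * ∑ c ∈ C, ∏ ω with ω j = true, Φ ω c := by
  rw [Finset.sum_mul_sum]
  refine sum_congr rfl fun c₀ _ => sum_congr rfl fun c₁ _ => ?_
  rw [prod_eq_prod_filter_false_mul _ j]
  congr 1 <;> exact prod_congr rfl fun ω hω => by simp_all

omit [Fintype ι] in
lemma piecewise_comp_update {β : Type*} {J : Finset ι} {j : ι} (hj : j ∉ J) (η ω : ι → β)
    (b : β) :
    J.piecewise η (update ω j b) = (insert j J).piecewise (update η j b) ω := by
  ext i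
  by_cases hi : i = j
  · subst hi; simp [hj]
  · simp [piecewise, hi]

theorem gowers_cauchy_schwarz_of_sq_le {β : Type*} (Φ : ((ι → Bool) → β) → ℝ)
    (hsq : ∀ (F : (ι → Bool) → β) (j : ι),
      Φ F ^ 2 ≤ Φ (fun ω => F (update ω j false)) * Φ (fun ω => F (update ω j true)))
    (hnonneg : ∀ (F : (ι → Bool) → β) (j : ι) (b : Bool), 0 ≤ Φ (fun ω => F (update ω j b)))
    (F : (ι → Bool) → β) :
    Φ F ^ 2 ^ Fintype.card ι ≤ ∏ η, Φ (fun _ => F η) := by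
  -- Decouple the coordinates in `J` one at a time, applying `hsq` to every factor.
  suffices ∀ J : Finset ι, Φ F ^ 2 ^ Fintype.card ι ≤ ∏ η, Φ (fun ω => F (J.piecewise η ω)) by
    simpa using this univ
  intro J
  induction J using Finset.induction_on with
  | empty => simp
  | insert j J hj ih =>
    set P : (ι → Bool) → ℝ := fun η => Φ (fun ω => F ((insert j J).piecewise η ω))
    have hP : 0 ≤ ∏ η, P η := prod_nonneg fun η _ => by
      have hj' (ω : ι → Bool) : (insert j J).piecewise η (update ω j false) =
          (insert j J).piecewise η ω :=
        (insert j J).piecewise_congr (fun _ _ => rfl) fun i hi =>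
          update_of_ne (ne_of_mem_of_not_mem (mem_insert_self j J) hi).symm ..
      simpa only [hj'] using hnonneg (fun ω => F ((insert j J).piecewise η ω)) j false
    refine ih.trans (le_abs_self _ |>.trans (abs_le_of_sq_le_sq ?_ hP))
    rw [← prod_comp_update_false_mul_true P j, ← prod_pow]
    refine prod_le_prod (fun _ _ => sq_nonneg _) fun η _ => ?_
    simpa only [P, piecewise_comp_update hj] using hsq (fun ω => F (J.piecewise η ω)) j
end Cube

section BoxSum
variable {ι α : Type*} [Fintype ι] [DecidableEq ι] (A : ι → Finset α)

def cubeVertex (a₀ a₁ : ι → α) (ω : ι → Bool) : ι → α := fun i => if ω i then a₁ i else a₀ i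

noncomputable def boxSum (F : (ι → Bool) → (ι → α) → ℝ) : ℝ :=
  ∑ a₀ ∈ piFinset A, ∑ a₁ ∈ piFinset A, ∏ ω, F ω (cubeVertex a₀ a₁ ω)

lemma sum_piFinset_sum_update {M : Type*} [AddCommMonoid M] (j : ι) (φ : (ι → α) → M) :
    ∑ a ∈ piFinset A, ∑ c ∈ A j, φ (update a j c) = #(A j) • ∑ a ∈ piFinset A, φ a := by
  simp_rw [smul_sum, ← sum_const, ← sum_product']
  refine sum_nbij' (fun p => (update p.1 j p.2, p.1 j)) (fun p => (update p.1 j p.2, p.1 j))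
    ?_ ?_ (fun p _ => by simp) (fun p _ => by simp) fun _ _ => rfl <;>
  · rintro ⟨a, c⟩ h
    simp only [mem_product, Fintype.mem_piFinset] at h ⊢
    exact ⟨fun i => by rcases eq_or_ne i j with rfl | hi <;> simp [*], h.1 j⟩

omit [Fintype ι] in
lemma cubeVertex_update (a₀ a₁ : ι → α) (j : ι) (c₀ c₁ : α) (ω : ι → Bool) :
    cubeVertex (update a₀ j c₀) (update a₁ j c₁) ω =
      update (cubeVertex a₀ a₁ ω) j (if ω j then c₁ else c₀) := by
  ext i
  rcases eq_or_ne i j with rfl | hi <;> simp [cubeVertex, *]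

omit [Fintype ι] in
lemma update_cubeVertex_update (a₀ a₁ : ι → α) (j : ι) (b : Bool) (c : α) (ω : ι → Bool) :
    update (cubeVertex a₀ a₁ (update ω j b)) j c = update (cubeVertex a₀ a₁ ω) j c := by
  ext i
  rcases eq_or_ne i j with rfl | hi <;> simp [cubeVertex, *]

/- Re-averaging over the `j`-th coordinates of `a₀` and `a₁` separates the vertices with
`ω j = false` from those with `ω j = true`, without splitting `piFinset A` as a product. -/
lemma sq_card_mul_boxSum (F : (ι → Bool) → (ι → α) → ℝ) (j : ι) :
    (#(A j) : ℝ) ^ 2 * boxSum A F = ∑ a₀ ∈ piFinset A, ∑ a₁ ∈ piFinset A,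
      ∑ c₀ ∈ A j, ∑ c₁ ∈ A j,
        ∏ ω, F ω (update (cubeVertex a₀ a₁ ω) j (if ω j then c₁ else c₀)) := by
  simp_rw [← cubeVertex_update]
  rw [sq, mul_assoc, ← nsmul_eq_mul, ← nsmul_eq_mul, boxSum, ← sum_piFinset_sum_update, smul_sum]
  refine sum_congr rfl fun a₀ _ => ?_
  rw [smul_sum]
  conv_rhs => rw [sum_comm]
  exact sum_congr rfl fun c₀ _ => (sum_piFinset_sum_update A j _).symm

noncomputable def boxHalf (F : (ι → Bool) → (ι → α) → ℝ) (j : ι) (b : Bool) (a₀ a₁ : ι → α) :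
    ℝ :=
  ∑ c ∈ A j, ∏ ω with ω j = b, F ω (update (cubeVertex a₀ a₁ ω) j c)

lemma sq_card_mul_boxSum_eq_sum_mul (F : (ι → Bool) → (ι → α) → ℝ) (j : ι) :
    (#(A j) : ℝ) ^ 2 * boxSum A F = ∑ a₀ ∈ piFinset A, ∑ a₁ ∈ piFinset A,
      boxHalf A F j false a₀ a₁ * boxHalf A F j true a₀ a₁ := by
  rw [sq_card_mul_boxSum]
  exact sum_congr rfl fun a₀ _ => sum_congr rfl fun a₁ _ =>
    sum_sum_prod_ite_eq_mul (fun ω c => F ω (update (cubeVertex a₀ a₁ ω) j c)) j (A j)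

lemma sq_card_mul_boxSum_comp_update (F : (ι → Bool) → (ι → α) → ℝ) (j : ι) (b : Bool) :
    (#(A j) : ℝ) ^ 2 * boxSum A (fun ω => F (update ω j b)) =
      ∑ a₀ ∈ piFinset A, ∑ a₁ ∈ piFinset A, boxHalf A F j b a₀ a₁ ^ 2 := by
  rw [sq_card_mul_boxSum]
  refine sum_congr rfl fun a₀ _ => sum_congr rfl fun a₁ _ => ?_
  have hhalf (b' : Bool) (c : α) :
      ∏ ω with ω j = b', F (update ω j b) (update (cubeVertex a₀ a₁ ω) j c) =
        ∏ ω with ω j = b, F ω (update (cubeVertex a₀ a₁ ω) j c) := by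
    simpa only [update_cubeVertex_update] using
      prod_filter_comp_update (fun ω => F ω (update (cubeVertex a₀ a₁ ω) j c)) j b b'
  rw [sum_sum_prod_ite_eq_mul (fun ω c => F (update ω j b) (update (cubeVertex a₀ a₁ ω) j c)),
    sq, boxHalf]
  simp only [hhalf]

lemma boxSum_eq_zero_of_eq_empty (F : (ι → Bool) → (ι → α) → ℝ) {j : ι} (hj : A j = ∅) :
    boxSum A F = 0 := by
  simp [boxSum, Fintype.piFinset_eq_empty.2 ⟨j, hj⟩]

lemma boxSum_comp_update_nonneg (F : (ι → Bool) → (ι → α) → ℝ) (j : ι) (b : Bool) :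
    0 ≤ boxSum A (fun ω => F (update ω j b)) := by
  rcases (A j).eq_empty_or_nonempty with hj | hj
  · rw [boxSum_eq_zero_of_eq_empty A _ hj]
  refine nonneg_of_mul_nonneg_right ?_ (by positivity : (0 : ℝ) < #(A j) ^ 2)
  rw [sq_card_mul_boxSum_comp_update]
  exact sum_nonneg fun _ _ => sum_nonneg fun _ _ => sq_nonneg _

lemma boxSum_sq_le (F : (ι → Bool) → (ι → α) → ℝ) (j : ι) :
    boxSum A F ^ 2 ≤
      boxSum A (fun ω => F (update ω j false)) * boxSum A (fun ω => F (update ω j true)) := by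
  rcases (A j).eq_empty_or_nonempty with hj | hj
  · simp [boxSum_eq_zero_of_eq_empty A _ hj]
  have hm : (0 : ℝ) < (#(A j) ^ 2) ^ 2 := by positivity
  refine le_of_mul_le_mul_left ?_ hm
  calc (#(A j) ^ 2 : ℝ) ^ 2 * boxSum A F ^ 2 = (#(A j) ^ 2 * boxSum A F) ^ 2 := by ring
    _ ≤ (#(A j) ^ 2 * boxSum A (fun ω => F (update ω j false))) *
          (#(A j) ^ 2 * boxSum A (fun ω => F (update ω j true))) := by
      rw [sq_card_mul_boxSum_eq_sum_mul, sq_card_mul_boxSum_comp_update,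
        sq_card_mul_boxSum_comp_update, ← sum_product', ← sum_product', ← sum_product']
      exact sum_mul_sq_le_sq_mul_sq (piFinset A ×ˢ piFinset A)
        (fun a => boxHalf A F j false a.1 a.2) (fun a => boxHalf A F j true a.1 a.2)
    _ = _ := by ring

theorem boxSum_pow_le_prod (F : (ι → Bool) → (ι → α) → ℝ) :
    boxSum A F ^ 2 ^ Fintype.card ι ≤ ∏ η, boxSum A (fun _ => F η) :=
  gowers_cauchy_schwarz_of_sq_le (boxSum A) (boxSum_sq_le A) (boxSum_comp_update_nonneg A) F

lemma boxSum_add (F G : (ι → Bool) → (ι → α) → ℝ) :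
    boxSum A (F + G) = ∑ T : Finset (ι → Bool), boxSum A (T.piecewise F G) := by
  have hprod (a₀ a₁ : ι → α) : ∏ ω, (F + G) ω (cubeVertex a₀ a₁ ω) =
      ∑ T : Finset (ι → Bool), ∏ ω, T.piecewise F G ω (cubeVertex a₀ a₁ ω) := by
    refine (Fintype.prod_add _ _).trans (sum_congr rfl fun T _ => ?_)
    calc _ = ∏ ω, T.piecewise (fun ω => F ω (cubeVertex a₀ a₁ ω))
          (fun ω => G ω (cubeVertex a₀ a₁ ω)) ω := by
          rw [prod_piecewise, univ_inter, compl_eq_univ_sdiff]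
      _ = _ := prod_congr rfl fun ω _ => by by_cases hω : ω ∈ T <;> simp [hω]
  simp only [boxSum, hprod]
  exact (sum_congr rfl fun _ _ => sum_comm).trans sum_comm

end BoxSum

section BoxSumTriangle
variable {ι α : Type*} [Fintype ι] [DecidableEq ι] (A : ι → Finset α)

lemma boxSum_const_add_le_pow (f g : (ι → α) → ℝ) {a b : ℝ} (ha : 0 ≤ a) (hb : 0 ≤ b)
    (hf : boxSum A (fun _ => f) = a ^ 2 ^ Fintype.card ι)
    (hg : boxSum A (fun _ => g) = b ^ 2 ^ Fintype.card ι) :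
    boxSum A (fun _ => f + g) ≤ (a + b) ^ 2 ^ Fintype.card ι := by
  have hT (T : Finset (ι → Bool)) :
      boxSum A (T.piecewise (fun _ => f) (fun _ => g)) ≤ a ^ #T * b ^ #Tᶜ := by
    refine le_of_pow_le_pow_left₀ (n := 2 ^ Fintype.card ι) (by positivity) (by positivity) ?_
    calc _ ≤ ∏ η, boxSum A (fun _ => T.piecewise (fun _ => f) (fun _ => g) η) :=
          boxSum_pow_le_prod A _
      _ = ∏ η, T.piecewise (fun _ => a ^ 2 ^ Fintype.card ι)
            (fun _ => b ^ 2 ^ Fintype.card ι) η :=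
          prod_congr rfl fun η _ => by by_cases hη : η ∈ T <;> simp [hη, hf, hg]
      _ = _ := by
          rw [prod_piecewise, univ_inter, ← compl_eq_univ_sdiff, prod_const, prod_const]
          ring
  calc boxSum A (fun _ => f + g)
        = ∑ T : Finset (ι → Bool), boxSum A (T.piecewise (fun _ => f) (fun _ => g)) :=
        boxSum_add A _ _
    _ ≤ ∑ T : Finset (ι → Bool), a ^ #T * b ^ #Tᶜ := sum_le_sum fun T _ => hT T
    _ = (a + b) ^ 2 ^ Fintype.card ι := by
        rw [← Fintype.card_bool, ← Fintype.card_fun, ← card_univ, ← prod_const,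
          Fintype.prod_add]
        simp only [prod_const]

lemma rpow_one_div_two_pow_pow {x : ℝ} (hx : 0 ≤ x) (k : ℕ) :
    (x ^ (1 / 2 ^ k : ℝ)) ^ 2 ^ k = x := by
  simpa using Real.rpow_inv_natCast_pow hx (pow_ne_zero k two_ne_zero)

lemma pow_two_pow_rpow_one_div {x : ℝ} (hx : 0 ≤ x) (k : ℕ) :
    (x ^ 2 ^ k) ^ (1 / 2 ^ k : ℝ) = x := by
  simpa using Real.pow_rpow_inv_natCast hx (pow_ne_zero k two_ne_zero)

variable [Nonempty ι]

lemma boxSum_const_nonneg (f : (ι → α) → ℝ) : 0 ≤ boxSum A (fun _ => f) :=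
  boxSum_comp_update_nonneg A (fun _ => f) (Classical.arbitrary ι) false

theorem boxSum_rpow_add_le (f g : (ι → α) → ℝ) :
    boxSum A (fun _ => f + g) ^ (1 / 2 ^ Fintype.card ι : ℝ) ≤
      boxSum A (fun _ => f) ^ (1 / 2 ^ Fintype.card ι : ℝ) +
        boxSum A (fun _ => g) ^ (1 / 2 ^ Fintype.card ι : ℝ) := by
  have hf := boxSum_const_nonneg A f
  have hg := boxSum_const_nonneg A g
  have hle := boxSum_const_add_le_pow A f g (by positivity) (by positivity)
    (rpow_one_div_two_pow_pow hf _).symm (rpow_one_div_two_pow_pow hg _).symm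
  refine (Real.rpow_le_rpow (boxSum_const_nonneg A _) hle (by positivity)).trans_eq ?_
  exact pow_two_pow_rpow_one_div (by positivity) _

end BoxSumTriangle

theorem rpow_sum_pow_div_le_add {κ : Type*} (S : Finset κ) {K : ℝ} (hK : 0 ≤ K) {n : ℕ}
    (hn : n ≠ 0) {a b c : κ → ℝ} (ha : ∀ i ∈ S, 0 ≤ a i) (hb : ∀ i ∈ S, 0 ≤ b i)
    (hc : ∀ i ∈ S, 0 ≤ c i) (hcab : ∀ i ∈ S, c i ≤ a i + b i) :
    ((∑ i ∈ S, c i ^ n) / K) ^ (1 / n : ℝ) ≤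
      ((∑ i ∈ S, a i ^ n) / K) ^ (1 / n : ℝ) + ((∑ i ∈ S, b i ^ n) / K) ^ (1 / n : ℝ) := by
  have hsum {x : κ → ℝ} (hx : ∀ i ∈ S, 0 ≤ x i) : 0 ≤ ∑ i ∈ S, x i ^ n :=
    sum_nonneg fun i hi => pow_nonneg (hx i hi) n
  have hminkowski := Real.Lp_add_le_of_nonneg (s := S) (p := n)
    (by exact_mod_cast Nat.one_le_iff_ne_zero.2 hn) ha hb
  simp only [Real.rpow_natCast] at hminkowski
  rw [Real.div_rpow (hsum hc) hK, Real.div_rpow (hsum ha) hK, Real.div_rpow (hsum hb) hK,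
    ← add_div]
  gcongr ?_ / _
  refine le_trans ?_ hminkowski
  gcongr with i hi
  exacts [hsum hc, hc i hi, hcab i hi]

section LocalBoxNorm
variable {N d s : ℕ} [NeZero N]

def progressionPoint (u : Fin s → Fin d → ℤ) (x : Fin d → ZMod N) (a : Fin s → ℕ) :
    Fin d → ZMod N :=
  fun i => x i + ∑ j, (a j : ZMod N) * (u j i : ZMod N)

lemma boxInner_const_eq (M : ℕ) (u : Fin s → Fin d → ℤ) (f : (Fin d → ZMod N) → ℝ) :
    boxInner N d s M u (fun _ => f) =
      (∑ x, boxSum (fun _ => Icc 1 M) (fun _ => f ∘ progressionPoint u x)) /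
        ((N : ℝ) ^ d * (M : ℝ) ^ (2 * s)) :=
  rfl

variable [NeZero s]

lemma boxNorm_nonneg (M : ℕ) (u : Fin s → Fin d → ℤ) (f : (Fin d → ZMod N) → ℝ) :
    0 ≤ boxNorm N d s M u f := by
  rw [boxNorm, boxInner_const_eq]
  exact Real.rpow_nonneg (div_nonneg (sum_nonneg fun x _ => boxSum_const_nonneg _ _)
    (by positivity)) _

lemma boxNorm_eq (M : ℕ) (u : Fin s → Fin d → ℤ) (f : (Fin d → ZMod N) → ℝ) :
    boxNorm N d s M u f =
      ((∑ x, (boxSum (fun _ => Icc 1 M) (fun _ => f ∘ progressionPoint u x) ^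
        (1 / 2 ^ s : ℝ)) ^ 2 ^ s) / ((N : ℝ) ^ d * (M : ℝ) ^ (2 * s))) ^ (1 / 2 ^ s : ℝ) := by
  simp only [rpow_one_div_two_pow_pow (boxSum_const_nonneg _ _)]
  rfl

theorem boxNorm_add_le (M : ℕ) (u : Fin s → Fin d → ℤ) (f g : (Fin d → ZMod N) → ℝ) :
    boxNorm N d s M u (f + g) ≤ boxNorm N d s M u f + boxNorm N d s M u g := by
  let A : Fin s → Finset ℕ := fun _ => Icc 1 M
  have hroot_nonneg (φ : (Fin d → ZMod N) → ℝ) (x : Fin d → ZMod N) :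
      0 ≤ boxSum A (fun _ => φ ∘ progressionPoint u x) ^ (1 / 2 ^ s : ℝ) :=
    Real.rpow_nonneg (boxSum_const_nonneg A _) _
  have h := rpow_sum_pow_div_le_add univ (K := (N : ℝ) ^ d * (M : ℝ) ^ (2 * s)) (by positivity)
    (pow_ne_zero s two_ne_zero) (fun x _ => hroot_nonneg f x) (fun x _ => hroot_nonneg g x)
    (fun x _ => hroot_nonneg (f + g) x) fun x _ => by
      simpa only [Fintype.card_fin, Pi.add_comp] using
        boxSum_rpow_add_le A (f ∘ progressionPoint u x) (g ∘ progressionPoint u x)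
  simp only [Nat.cast_pow, Nat.cast_ofNat] at h
  simpa only [boxNorm_eq] using h

end LocalBoxNorm

theorem avg_local_box_norm_triangle_general
    (N M H d s t : ℕ) [NeZero N] (hs : 1 ≤ s)
    (Q : Fin s → (Fin t → ℤ) → Fin d → ℤ) (f g : (Fin d → ZMod N) → ℝ) :
    avgBoxNorm N d s t M H Q (f + g) ≤
      avgBoxNorm N d s t M H Q f + avgBoxNorm N d s t M H Q g := by
  have : NeZero s := ⟨by omega⟩
  have h := rpow_sum_pow_div_le_add (piFinset fun _ : Fin t => Icc (1 : ℤ) H)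
    (K := (H : ℝ) ^ t) (by positivity) (pow_ne_zero s two_ne_zero)
    (fun h _ => boxNorm_nonneg M (fun j => Q j h) f)
    (fun h _ => boxNorm_nonneg M (fun j => Q j h) g)
    (fun h _ => boxNorm_nonneg M (fun j => Q j h) (f + g))
    fun h _ => boxNorm_add_le M (fun j => Q j h) f g
  simp only [Nat.cast_pow, Nat.cast_ofNat] at h
  exact h

/-- The averaged local box norm satisfies the triangle inequality. -/
theorem avg_local_box_norm_triangle
    (N M H d s t : ℕ) [NeZero N] (hM : 1 ≤ M) (hH : 1 ≤ H)
    (hd : 1 ≤ d) (hs : 1 ≤ s) (ht : 1 ≤ t)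
    (Q : Fin s → (Fin t → ℤ) → Fin d → ℤ) (f g : (Fin d → ZMod N) → ℝ) :
    avgBoxNorm N d s t M H Q (f + g) ≤
      avgBoxNorm N d s t M H Q f + avgBoxNorm N d s t M H Q g :=
  avg_local_box_norm_triangle_general N M H d s t hs Q f g
end
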